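/- Let X ⊆ ℝᵏ be open and let E : X → ℝ^{m×n} be a continuous matrix function such that rank(E(x)) = r for all x ∈ X. Then for every x₀ ∈ X there exist an open neighborhood X₀ ⊆ X of x₀, a continuous matrix function U : X₀ → ℝ^{m×m} invertible at every point, and a permutation matrix Π ∈ ℝ^{n×n}, such that U(x)ᵀ E(x) Π has the block form [[I_r, E₁₂(x)],[0, 0]] for all x ∈ X₀, where E₁₂ : X₀ → ℝ^{r×(n−r)} is continuous. -/

import Mathlib

/-! At `x₀` pick `r` independent columns of `E x₀`, move them to the front by `σ` and complete
them to a basis of `ℝᵐ`. Replacing the first `r` basis vectors by the corresponding columns of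
`E x` gives a continuous matrix `P x`, invertible near `x₀`, so `U := (P⁻¹)ᵀ`. The first `r`
columns of `P⁻¹ E Π` are then `e₁, …, e_r`; as its rank is `r`, they span its column space, which
forces every row below the `r`-th to vanish. -/

open Matrix Set

/-- The permutation matrix associated with a permutation `σ` of the columns:
`(Π)_{i j} = 1` if `i = σ j` and `0` otherwise, so that `(M * Π) i j = M i (σ j)`. -/
def permMat {n : ℕ} (σ : Equiv.Perm (Fin n)) : Matrix (Fin n) (Fin n) ℝ :=
  Matrix.of fun i j => if i = σ j then (1 : ℝ) else 0

open Module Function Submodule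

lemma Equiv.Perm.exists_apply_eq_of_injective {α β : Type*} [Finite β] {g f : α → β}
    (hg : Injective g) (hf : Injective f) : ∃ σ : Equiv.Perm β, ∀ a, σ (g a) = f a := by
  classical
  let e : range g ≃ range f := (Equiv.ofInjective g hg).symm.trans (Equiv.ofInjective f hf)
  refine ⟨e.extendSubtype, fun a => ?_⟩
  rw [Equiv.extendSubtype_apply_of_mem e (g a) ⟨a, rfl⟩]
  simp [e]

lemma exists_linearIndependent_extension_fin {K V : Type*} [DivisionRing K] [AddCommGroup V]
    [Module K V] {r s : ℕ} (hrs : r ≤ s) (hs : s ≤ finrank K V) {v : Fin r → V}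
    (hv : LinearIndependent K v) :
    ∃ w : Fin s → V, LinearIndependent K w ∧ ∀ l, w (Fin.castLE hrs l) = v l := by
  induction s, hrs using Nat.le_induction with
  | base => exact ⟨v, hv, fun _ => rfl⟩
  | succ s hrs ih =>
    obtain ⟨w, hw, hwv⟩ := ih (Nat.le_of_succ_le hs)
    obtain ⟨x, hx⟩ := exists_linearIndependent_snoc_of_lt_finrank hw hs
    refine ⟨Fin.snoc w x, hx, fun l => ?_⟩
    rw [← hwv l, ← Fin.snoc_castSucc (α := fun _ => V) x w]
    rfl

namespace Matrix

section ReplaceLeadingCols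

variable {K : Type*} {m n r : ℕ} {hrn : r ≤ n}

def replaceLeadingCols (hrn : r ≤ n) (G : Matrix (Fin m) (Fin n) K)
    (P : Matrix (Fin m) (Fin m) K) : Matrix (Fin m) (Fin m) K :=
  of fun i l => if hl : (l : ℕ) < r then G i (Fin.castLE hrn ⟨l, hl⟩) else P i l

variable {hrm : r ≤ m}

lemma col_replaceLeadingCols (G : Matrix (Fin m) (Fin n) K) (P : Matrix (Fin m) (Fin m) K)
    (l : Fin r) :
    (replaceLeadingCols hrn G P).col (Fin.castLE hrm l) = G.col (Fin.castLE hrn l) := by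
  ext i
  exact dif_pos l.isLt

lemma replaceLeadingCols_eq_self {G : Matrix (Fin m) (Fin n) K} {P : Matrix (Fin m) (Fin m) K}
    (hcol : ∀ l, G.col (Fin.castLE hrn l) = P.col (Fin.castLE hrm l)) :
    replaceLeadingCols hrn G P = P := by
  ext i l
  by_cases hl : (l : ℕ) < r
  · simpa [replaceLeadingCols, hl] using congrFun (hcol ⟨l, hl⟩) i
  · simp [replaceLeadingCols, hl]

lemma continuous_replaceLeadingCols [TopologicalSpace K] (P : Matrix (Fin m) (Fin m) K) :
    Continuous fun G : Matrix (Fin m) (Fin n) K => replaceLeadingCols hrn G P := by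
  refine continuous_matrix fun i l => ?_
  by_cases hl : (l : ℕ) < r
  · simpa [replaceLeadingCols, hl] using continuous_id.matrix_elem _ _
  · simpa [replaceLeadingCols, hl] using continuous_const

end ReplaceLeadingCols

variable {K : Type*} [Field K]

lemma mul_permMat {m n : ℕ} (M : Matrix (Fin m) (Fin n) ℝ) (σ : Equiv.Perm (Fin n))
    (i : Fin m) (j : Fin n) : (M * permMat σ) i j = M i (σ j) := by
  simp [mul_apply, permMat]

lemma exists_linearIndependent_cols_of_rank_eq {ι κ : Type*} [Fintype ι] [Fintype κ]
    (M : Matrix ι κ K) {r : ℕ} (hM : M.rank = r) :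
    ∃ f : Fin r → κ, Injective f ∧ LinearIndependent K (M.col ∘ f) := by
  obtain ⟨κ', a, ha, hspan, hind⟩ := exists_linearIndependent' K M.col
  have := Fintype.ofInjective a ha
  have hcard : Fintype.card κ' = r := by
    rw [← hM, rank_eq_finrank_span_cols, ← hspan, finrank_span_eq_card hind]
  let e := Fintype.equivFinOfCardEq hcard
  exact ⟨a ∘ e.symm, ha.comp e.symm.injective, hind.comp _ e.symm.injective⟩

lemma exists_isUnit_det_col_castLE_eq {m r : ℕ} (hrm : r ≤ m) {v : Fin r → Fin m → K}
    (hv : LinearIndependent K v) :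
    ∃ P : Matrix (Fin m) (Fin m) K, IsUnit P.det ∧ ∀ l, P.col (Fin.castLE hrm l) = v l := by
  obtain ⟨w, hw, hwv⟩ := exists_linearIndependent_extension_fin hrm (by simp) hv
  refine ⟨(of w)ᵀ, ?_, hwv⟩
  rw [← isUnit_iff_isUnit_det, ← linearIndependent_cols_iff_isUnit]
  exact hw

lemma exists_perm_isUnit_det_col_castLE_eq {m n r : ℕ} (M : Matrix (Fin m) (Fin n) ℝ)
    (hM : M.rank = r) (hrm : r ≤ m) (hrn : r ≤ n) :
    ∃ (σ : Equiv.Perm (Fin n)) (P : Matrix (Fin m) (Fin m) ℝ), IsUnit P.det ∧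
      ∀ l, (M * permMat σ).col (Fin.castLE hrn l) = P.col (Fin.castLE hrm l) := by
  obtain ⟨f, hf, hind⟩ := M.exists_linearIndependent_cols_of_rank_eq hM
  obtain ⟨σ, hσ⟩ := Equiv.Perm.exists_apply_eq_of_injective (Fin.castLE_injective hrn) hf
  obtain ⟨P, hP, hPcol⟩ := exists_isUnit_det_col_castLE_eq hrm hind
  refine ⟨σ, P, hP, fun l => ?_⟩
  ext i
  rw [col_apply, mul_permMat, hσ, hPcol]
  rfl

lemma col_inv_mul_of_col_eq {ι κ : Type*} [Fintype ι] [DecidableEq ι] {P : Matrix ι ι K}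
    (hP : IsUnit P.det) {M : Matrix ι κ K} {j : κ} {l : ι} (hcol : M.col j = P.col l) :
    (P⁻¹ * M).col j = Pi.single l 1 := by
  ext i
  rw [col_apply, mul_apply]
  simp_rw [← col_apply M, hcol, col_apply]
  rw [← mul_apply, nonsing_inv_mul P hP, one_apply, Pi.single_apply]

section Block

variable {m n r : ℕ}

def topRightBlock (hrm : r ≤ m) (hrn : r ≤ n) (F : Matrix (Fin m) (Fin n) K) :
    Matrix (Fin r) (Fin (n - r)) K :=
  F.submatrix (Fin.castLE hrm) fun b => ⟨r + b, by omega⟩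

variable {hrm : r ≤ m} {hrn : r ≤ n} {F : Matrix (Fin m) (Fin n) K}

lemma apply_eq_zero_of_rank_le (hF : F.rank ≤ r)
    (hcol : ∀ l, F.col (Fin.castLE hrn l) = Pi.single (Fin.castLE hrm l) 1)
    {i : Fin m} (hi : r ≤ i) (j : Fin n) : F i j = 0 := by
  let e : Fin r → Fin m → K := fun l => Pi.single (Fin.castLE hrm l) 1
  have he : LinearIndependent K e :=
    (Pi.linearIndependent_single_one (Fin m) K).comp _ (Fin.castLE_injective hrm)
  have hle : span K (range e) ≤ span K (range F.col) :=
    span_mono (range_subset_iff.2 fun l => ⟨_, hcol l⟩)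
  have heq : span K (range e) = span K (range F.col) := by
    refine Submodule.eq_of_le_of_finrank_le hle ?_
    rw [← rank_eq_finrank_span_cols, finrank_span_eq_card he, Fintype.card_fin]
    exact hF
  have hker : span K (range e) ≤ LinearMap.ker (LinearMap.proj i) :=
    span_le.2 <| range_subset_iff.2 fun l => by
      have : i ≠ Fin.castLE hrm l := fun h => by have := l.isLt; simp [h] at hi; omega
      simp [e, this]
  have hj : F.col j ∈ span K (range e) := heq ▸ subset_span ⟨j, rfl⟩
  exact hker hj

lemma apply_eq_block (hF : F.rank ≤ r)
    (hcol : ∀ l, F.col (Fin.castLE hrn l) = Pi.single (Fin.castLE hrm l) 1)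
    (i : Fin m) (j : Fin n) :
    F i j =
      if hi : (i : ℕ) < r then
        (if hj : (j : ℕ) < r then (if (i : ℕ) = (j : ℕ) then 1 else 0)
         else topRightBlock hrm hrn F ⟨i, hi⟩ ⟨(j : ℕ) - r, by have := j.isLt; omega⟩)
      else 0 := by
  split_ifs with hi hj hij
  · simpa [Pi.single_apply, Fin.ext_iff, hij] using congrFun (hcol ⟨j, hj⟩) i
  · simpa [Pi.single_apply, Fin.ext_iff, hij] using congrFun (hcol ⟨j, hj⟩) i
  · simp only [topRightBlock, submatrix_apply]
    congr 1
    ext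
    simp only
    omega
  · exact apply_eq_zero_of_rank_le hF hcol (not_lt.1 hi) j

end Block

end Matrix

lemma ContinuousOn.matrix_inv {α ι K : Type*} [TopologicalSpace α] [Fintype ι] [DecidableEq ι]
    [Field K] [TopologicalSpace K] [IsTopologicalRing K] [ContinuousInv₀ K]
    {P : α → Matrix ι ι K} {s : Set α} (hP : ContinuousOn P s) (hdet : ∀ x ∈ s, (P x).det ≠ 0) :
    ContinuousOn (fun x => (P x)⁻¹) s := fun x hx =>
  (continuousAt_matrix_inv _ (by rw [Ring.inverse_eq_inv']; exact continuousAt_inv₀ (hdet x hx))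
    ).comp_continuousWithinAt (hP x hx)

/-- a continuous matrix function of constant rank `r` admits, locally
around every point, a continuous pointwise invertible left transformation `U` and a
constant column permutation `Π` bringing it to the block form `[[I_r, E₁₂], [0, 0]]`. -/
theorem local_constant_rank_normalization {k m n r : ℕ}
    (X : Set (Fin k → ℝ)) (hX : IsOpen X)
    (E : (Fin k → ℝ) → Matrix (Fin m) (Fin n) ℝ)
    (hEcont : ContinuousOn E X)
    (hrank : ∀ x ∈ X, (E x).rank = r)
    (x0 : Fin k → ℝ) (hx0 : x0 ∈ X) :
    ∃ (X0 : Set (Fin k → ℝ)) (U : (Fin k → ℝ) → Matrix (Fin m) (Fin m) ℝ)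
      (σ : Equiv.Perm (Fin n))
      (E12 : (Fin k → ℝ) → Matrix (Fin r) (Fin (n - r)) ℝ),
      IsOpen X0 ∧ x0 ∈ X0 ∧ X0 ⊆ X ∧
      ContinuousOn U X0 ∧ (∀ x ∈ X0, IsUnit (U x).det) ∧
      ContinuousOn E12 X0 ∧
      (∀ x ∈ X0, ∀ (i : Fin m) (j : Fin n),
        ((U x)ᵀ * E x * permMat σ) i j =
          if hi : (i : ℕ) < r then
            (if hj : (j : ℕ) < r then (if (i : ℕ) = (j : ℕ) then 1 else 0)
             else E12 x ⟨i, hi⟩ ⟨(j : ℕ) - r, by have := j.isLt; omega⟩)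
          else 0) := by
  have hrm : r ≤ m := hrank x0 hx0 ▸ (E x0).rank_le_height
  have hrn : r ≤ n := hrank x0 hx0 ▸ (E x0).rank_le_width
  obtain ⟨σ, P0, hP0, hP0col⟩ :=
    (E x0).exists_perm_isUnit_det_col_castLE_eq (hrank x0 hx0) hrm hrn
  let P x := replaceLeadingCols hrn (E x * permMat σ) P0
  have hPcont : ContinuousOn P X := (continuous_replaceLeadingCols P0).comp_continuousOn
    ((continuous_id.matrix_mul continuous_const).comp_continuousOn hEcont)
  let X0 := X ∩ (fun x => (P x).det) ⁻¹' {0}ᶜ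
  have hdet : ∀ x ∈ X0, IsUnit (P x).det := fun x hx => isUnit_iff_ne_zero.2 hx.2
  have hPinv : ContinuousOn (fun x => (P x)⁻¹) X0 :=
    (hPcont.mono inter_subset_left).matrix_inv fun x hx => hx.2
  let F x := (P x)⁻¹ * E x * permMat σ
  have hFcont : ContinuousOn F X0 := continuousOn_iff_continuous_domRestrict.2
    ((hPinv.domRestrict.matrix_mul (hEcont.mono inter_subset_left).domRestrict).matrix_mul
      continuous_const)
  refine ⟨X0, fun x => ((P x)⁻¹)ᵀ, σ, fun x => topRightBlock hrm hrn (F x),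
    (continuous_id.matrix_det.comp_continuousOn hPcont).isOpen_inter_preimage hX
      isOpen_compl_singleton, ⟨hx0, ?_⟩, inter_subset_left,
    continuous_id.matrix_transpose.comp_continuousOn hPinv,
    fun x hx => by simpa using (P x).isUnit_nonsing_inv_det (hdet x hx),
    (continuous_id.matrix_submatrix _ _).comp_continuousOn hFcont, fun x hx i j => ?_⟩
  · simpa [P, replaceLeadingCols_eq_self hP0col] using hP0.ne_zero
  · rw [transpose_transpose]
    refine apply_eq_block ?_ (fun l => ?_) i j
    · calc (F x).rank ≤ ((P x)⁻¹ * E x).rank := rank_mul_le_left _ _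
        _ ≤ (E x).rank := rank_mul_le_right _ _
        _ = r := hrank x hx.1
    · rw [Matrix.mul_assoc]
      exact col_inv_mul_of_col_eq (hdet x hx) (col_replaceLeadingCols _ P0 l).symm
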